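/- Let T = (V, E) be a finite tree and let (c_e)_{e ∈ E} be real numbers in [0,1]. Then ∫_{[0,1]^V} ∏_{e = {u,v} ∈ E} 𝟙{|x_u − x_v| ≤ c_e} d𝐱 ≥ ∏_{e ∈ E} c_e. -/

import Mathlib

open MeasureTheory

/-- The gap `|x_u − x_v|` across an undirected edge `{u,v}`. -/
noncomputable def edgeGap {V : Type*} (x : V → ℝ) : Sym2 V → ℝ :=
  Sym2.lift ⟨fun u v => |x u - x v|, fun u v => abs_sub_comm (x u) (x v)⟩

/-!
Pull the integral back to the cube `V → I` with its product probability measure, where it is the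
volume of the set of configurations satisfying every band constraint. For a forest this volume is at
least `∏ c_e`: pick a leaf `v` with neighbour `u` and integrate out `x_v` first. No other constraint
involves `x_v`, and for every `x_u ∈ [0,1]` the constraint `|x_v − x_u| ≤ c` leaves a set of
`x_v ∈ [0,1]` of measure at least `c`; deleting the edge keeps the graph a forest.
-/

open Set Function
open scoped ENNReal unitInterval

namespace SimpleGraph

variable {V : Type*} {G : SimpleGraph V}

theorem IsAcyclic.exists_existsUnique_adj [Finite G.edgeSet] (hG : G.IsAcyclic)
    (hE : G.edgeSet.Nonempty) : ∃ v, ∃! u, G.Adj v u := by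
  obtain ⟨e, he⟩ := hE
  induction e using Sym2.ind with | _ a b =>
  have : Nonempty V := ⟨a⟩
  obtain ⟨u, v, p, hp, hmax⟩ := Walk.exists_isPath_forall_isPath_length_le_length G
  have hnil : ¬p.Nil := by
    rw [← Walk.length_eq_zero_iff]
    have := hmax a b _ (Path.singleton he).property
    have h1 : (Path.singleton he : G.Walk a b).length = 1 := rfl
    omega
  -- an endpoint of a longest path is a leaf: any other neighbour would extend the path
  refine ⟨u, p.snd, p.adj_snd hnil, fun w hadj => hG.eq_snd_of_adj_start hp hadj ?_⟩
  by_contra hw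
  have := hmax _ _ (p.cons hadj.symm) (hp.cons hw)
  simp at this

end SimpleGraph

namespace unitInterval

theorem ofReal_le_volume_abs_sub_le (a : I) {c : ℝ} (hc : c ≤ 1) :
    ENNReal.ofReal c ≤ volume {t : I | |(t : ℝ) - a| ≤ c} := by
  have hset : {t : I | |(t : ℝ) - a| ≤ c} = Subtype.val ⁻¹' Icc (a - c) (a + c) := by
    ext t
    rw [mem_preimage, ← mem_Icc_iff_abs_le, abs_sub_comm]
    rfl
  rw [hset, volume_apply, Subtype.image_preimage_coe, Icc_inter_Icc, Real.volume_Icc,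
    ENNReal.ofReal_le_ofReal_iff']
  obtain ⟨ha0, ha1⟩ := a.2
  rcases le_or_gt c 0 with hc0 | hc0
  · exact Or.inr hc0
  · left
    rcases max_cases 0 (a - c : ℝ) with ⟨h, _⟩ | ⟨h, _⟩ <;>
      rcases min_cases 1 (a + c : ℝ) with ⟨h', _⟩ | ⟨h', _⟩ <;> rw [h, h'] <;> linarith

variable {ι : Type*} [Fintype ι]

theorem ofReal_mul_volume_le_volume_inter_abs_sub_le [DecidableEq ι] {S : Set (ι → I)}
    (hS : MeasurableSet S) {v u : ι} (huv : u ≠ v) (hSv : ∀ x t, update x v t ∈ S ↔ x ∈ S)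
    {c : ℝ} (hc : c ≤ 1) :
    ENNReal.ofReal c * volume S ≤ volume (S ∩ {x | |(x v : ℝ) - x u| ≤ c}) := by
  have hB : MeasurableSet {x : ι → I | |(x v : ℝ) - x u| ≤ c} :=
    measurableSet_le (by fun_prop) measurable_const
  rw [← lintegral_indicator_const hS, ← lintegral_indicator_one (hS.inter hB), volume_pi]
  refine lintegral_le_of_lmarginal_le {v} (measurable_const.indicator hS)
    (measurable_one.indicator (hS.inter hB)) fun x => ?_
  simp only [lmarginal_singleton]
  by_cases hx : x ∈ S
  · have key := ofReal_le_volume_abs_sub_le (x u) hc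
    rw [← lintegral_indicator_one (measurableSet_le (by fun_prop) measurable_const)] at key
    simpa [indicator, hSv, hx, update_of_ne huv] using key
  · simp [indicator, hSv, hx]

theorem measurePreserving_coe_pi :
    MeasurePreserving (fun y : ι → I => Subtype.val ∘ y) volume
      (volume.restrict (univ.pi fun _ : ι => Icc (0 : ℝ) 1)) := by
  rw [volume_pi, volume_pi, Measure.restrict_pi_pi]
  exact measurePreserving_pi _ _ fun _ => measurePreserving_coe

end unitInterval

variable {V : Type*}

@[simp]
theorem edgeGap_mk (x : V → ℝ) (u v : V) : edgeGap x s(u, v) = |x u - x v| := rfl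

@[fun_prop]
theorem measurable_edgeGap (e : Sym2 V) : Measurable fun x : V → ℝ => edgeGap x e := by
  induction e using Sym2.ind with | _ u v => simp only [edgeGap_mk]; fun_prop

theorem edgeGap_update_of_notMem [DecidableEq V] {v : V} {e : Sym2 V} (hv : v ∉ e) (x : V → ℝ)
    (t : ℝ) : edgeGap (update x v t) e = edgeGap x e := by
  induction e using Sym2.ind with | _ a b =>
  rw [Sym2.mem_iff, not_or] at hv
  simp [update_of_ne (Ne.symm hv.1), update_of_ne (Ne.symm hv.2)]

def bandSet (G : SimpleGraph V) (c : Sym2 V → ℝ) : Set (V → ℝ) :=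
  {x | ∀ e ∈ G.edgeSet, edgeGap x e ≤ c e}

variable {G : SimpleGraph V} {c : Sym2 V → ℝ}

theorem measurableSet_bandSet [Finite G.edgeSet] : MeasurableSet (bandSet G c) := by
  convert G.edgeSet.toFinite.measurableSet_biInter fun e _ =>
    measurableSet_le (measurable_edgeGap e) (measurable_const (a := c e))
  ext x
  simp [bandSet]

theorem bandSet_eq_deleteEdges_inter {e : Sym2 V} (he : e ∈ G.edgeSet) :
    bandSet G c = bandSet (G.deleteEdges {e}) c ∩ {x | edgeGap x e ≤ c e} := by
  ext x
  simp only [bandSet, SimpleGraph.edgeSet_deleteEdges, mem_inter_iff, mem_sdiff,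
    mem_singleton_iff, and_imp]
  constructor
  · exact fun h => ⟨fun e' he' _ => h e' he', h e he⟩
  · rintro ⟨h, hx⟩ e' he'
    by_cases hee' : e' = e
    · exact hee' ▸ hx
    · exact h e' he' hee'

theorem update_mem_bandSet_iff [DecidableEq V] {v : V} (hv : ∀ w, ¬G.Adj v w) (x : V → ℝ)
    (t : ℝ) : update x v t ∈ bandSet G c ↔ x ∈ bandSet G c := by
  have hvG : ∀ e ∈ G.edgeSet, v ∉ e := fun e he hve =>
    hv _ (by rwa [← Sym2.other_spec hve, SimpleGraph.mem_edgeSet] at he)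
  exact forall₂_congr fun e he => by rw [edgeGap_update_of_notMem (hvG e he)]

theorem prod_ite_edgeGap_le_eq_indicator [Fintype G.edgeSet] (x : V → ℝ) :
    ∏ e ∈ G.edgeFinset, (if edgeGap x e ≤ c e then (1 : ℝ) else 0) =
      (bandSet G c).indicator 1 x := by
  classical
  simp only [Finset.prod_boole, indicator_apply, SimpleGraph.mem_edgeFinset]
  rfl

theorem prod_ofReal_le_volume_bandSet [Fintype V] [DecidableEq V] (G : SimpleGraph V)
    [Fintype G.edgeSet] (hG : G.IsAcyclic) (hc : ∀ e ∈ G.edgeSet, c e ≤ 1) :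
    ∏ e ∈ G.edgeFinset, ENNReal.ofReal (c e) ≤
      volume ((fun y : V → I => Subtype.val ∘ y) ⁻¹' bandSet G c) := by
  induction hn : G.edgeFinset.card generalizing G with
  | zero =>
    rw [Finset.card_eq_zero] at hn
    simp [hn, bandSet, SimpleGraph.edgeFinset_eq_empty.1 hn]
  | succ n ih =>
    classical
    obtain ⟨e, he⟩ := Finset.card_pos.1 (by omega : 0 < G.edgeFinset.card)
    obtain ⟨v, u, hvu, hleaf⟩ := hG.exists_existsUnique_adj ⟨e, G.mem_edgeFinset.1 he⟩
    set G' := G.deleteEdges {s(v, u)}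
    have hvu' : s(v, u) ∈ G.edgeFinset := G.mem_edgeFinset.2 hvu
    have hG'E : G'.edgeFinset = G.edgeFinset.erase s(v, u) := by
      ext e
      simp [G', and_comm]
    have hv : ∀ w, ¬G'.Adj v w := fun w hvw => by
      rw [SimpleGraph.deleteEdges_adj] at hvw
      exact hvw.2 (by rw [hleaf w hvw.1]; rfl)
    have IH := ih G' (hG.anti (G.deleteEdges_le _))
      (fun e he => hc e (SimpleGraph.edgeSet_mono (G.deleteEdges_le _) he))
      (by rw [hG'E, Finset.card_erase_of_mem hvu', hn]; rfl)
    calc ∏ e ∈ G.edgeFinset, ENNReal.ofReal (c e)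
        = ENNReal.ofReal (c s(v, u)) * ∏ e ∈ G'.edgeFinset, ENNReal.ofReal (c e) := by
          rw [hG'E, ← Finset.mul_prod_erase _ _ hvu']
      _ ≤ ENNReal.ofReal (c s(v, u)) *
            volume ((fun y : V → I => Subtype.val ∘ y) ⁻¹' bandSet G' c) := by
          gcongr
      _ ≤ _ := by
          rw [bandSet_eq_deleteEdges_inter (G.mem_edgeSet.2 hvu)]
          refine unitInterval.ofReal_mul_volume_le_volume_inter_abs_sub_le
            (measurableSet_bandSet.preimage (by fun_prop)) hvu.ne' (fun y t => ?_) (hc _ hvu)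
          change Subtype.val ∘ update y v t ∈ bandSet G' c ↔ Subtype.val ∘ y ∈ bandSet G' c
          rw [comp_update, update_mem_bandSet_iff hv]

/-- Lower bound on the band-constraint integral over a tree:
`Int_T(c) ≥ ∏_e c_e`. -/
theorem tree_band_integral_lower {V : Type} [Fintype V] [DecidableEq V]
    (G : SimpleGraph V) [Fintype G.edgeSet] (hT : G.IsTree)
    (c : Sym2 V → ℝ) (hc : ∀ e ∈ G.edgeFinset, c e ∈ Set.Icc (0:ℝ) 1) :
    (∏ e ∈ G.edgeFinset, c e)
      ≤ ∫ x in Set.univ.pi (fun _ : V => Set.Icc (0:ℝ) 1),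
          ∏ e ∈ G.edgeFinset, (if edgeGap x e ≤ c e then (1:ℝ) else 0) := by
  have hbound := prod_ofReal_le_volume_bandSet G hT.isAcyclic
    (c := c) fun e he => (hc e (G.mem_edgeFinset.2 he)).2
  simp_rw [prod_ite_edgeGap_le_eq_indicator, integral_indicator_one measurableSet_bandSet,
    measureReal_def, ← unitInterval.measurePreserving_coe_pi.measure_preimage
      measurableSet_bandSet.nullMeasurableSet]
  calc ∏ e ∈ G.edgeFinset, c e
      = (∏ e ∈ G.edgeFinset, ENNReal.ofReal (c e)).toReal := by
        rw [ENNReal.toReal_prod]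
        exact Finset.prod_congr rfl fun e he => (ENNReal.toReal_ofReal (hc e he).1).symm
    _ ≤ _ := ENNReal.toReal_mono (measure_ne_top _ _) hbound
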